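/- arXiv:math/0204141 — 2 statements merged into one kernel-verified Lean document; each statement's English description precedes it below -/
import Mathlib

section
/- A finite-dimensional quasi-Hopf algebra H over a field k is semisimple (as a ring) if and only if there exists a left integral t ∈ H (that is, an element satisfying ht = ε(h)t for all h ∈ H) with ε(t) ≠ 0. -/
open TensorProduct MulOpposite

/-- Contraction of a twofold tensor: `x ⊗ y ↦ f x * g y`. -/
noncomputable def tmul2 (k : Type*) {H : Type*} [Field k] [Ring H] [Algebra k H]
    (f g : H →ₗ[k] H) : H ⊗[k] H →ₗ[k] H :=
  LinearMap.mul' k H ∘ₗ TensorProduct.map f g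

/-- Contraction of a threefold tensor: `x ⊗ y ⊗ z ↦ f x * (g y * h z)`. -/
noncomputable def tmul3 (k : Type*) {H : Type*} [Field k] [Ring H] [Algebra k H]
    (f g h : H →ₗ[k] H) : H ⊗[k] (H ⊗[k] H) →ₗ[k] H :=
  LinearMap.mul' k H ∘ₗ TensorProduct.map f (tmul2 k g h)

/-- A quasibialgebra over a field `k`: an algebra `H` with algebra maps
`Δ : H → H ⊗ H`, `ε : H → k` and an invertible associator `φ ∈ H ⊗ H ⊗ H`
satisfying Drinfeld's axioms. -/
structure QuasiBialgebra (k H : Type*) [Field k] [Ring H] [Algebra k H] where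
  comul : H →ₐ[k] H ⊗[k] H
  counit : H →ₐ[k] k
  assoc : H ⊗[k] (H ⊗[k] H)
  assocInv : H ⊗[k] (H ⊗[k] H)
  assoc_mul_inv : assoc * assocInv = 1
  inv_mul_assoc : assocInv * assoc = 1
  counit_comul_left : ∀ h : H,
    (TensorProduct.lid k H) ((TensorProduct.map counit.toLinearMap LinearMap.id) (comul h)) = h
  counit_comul_right : ∀ h : H,
    (TensorProduct.rid k H) ((TensorProduct.map LinearMap.id counit.toLinearMap) (comul h)) = h
  quasi_coassoc : ∀ h : H,
    (Algebra.TensorProduct.map (AlgHom.id k H) comul) (comul h) * assoc =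
      assoc * (Algebra.TensorProduct.assoc k k k H H H)
        ((Algebra.TensorProduct.map comul (AlgHom.id k H)) (comul h))
  pentagon :
    (Algebra.TensorProduct.map (AlgHom.id k H) (Algebra.TensorProduct.map (AlgHom.id k H) comul)) assoc *
      (Algebra.TensorProduct.assoc k k k H H (H ⊗[k] H))
        ((Algebra.TensorProduct.map comul (AlgHom.id k (H ⊗[k] H))) assoc) =
    (Algebra.TensorProduct.includeRight (R := k) (A := H) assoc) *
      (Algebra.TensorProduct.map (AlgHom.id k H) (Algebra.TensorProduct.assoc k k k H H H).toAlgHom)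
        ((Algebra.TensorProduct.map (AlgHom.id k H)
          (Algebra.TensorProduct.map comul (AlgHom.id k H))) assoc) *
      (Algebra.TensorProduct.map (AlgHom.id k H) (Algebra.TensorProduct.assoc k k k H H H).toAlgHom)
        ((Algebra.TensorProduct.assoc k k k H (H ⊗[k] H) H)
          ((Algebra.TensorProduct.includeLeft (R := k) (B := H)
            (A := H ⊗[k] (H ⊗[k] H)) (S := k)) assoc))
  counit_mid :
    (TensorProduct.map LinearMap.id
      ((TensorProduct.lid k H).toLinearMap ∘ₗ
        TensorProduct.map counit.toLinearMap LinearMap.id)) assoc = 1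

/-- A quasiantipode `(S, α, β)` for a quasibialgebra. -/
structure QuasiAntipode {k H : Type*} [Field k] [Ring H] [Algebra k H]
    (qb : QuasiBialgebra k H) where
  S : H →ₗ[k] H
  S_bijective : Function.Bijective S
  S_one : S 1 = 1
  S_mul : ∀ a b : H, S (a * b) = S b * S a
  α : H
  β : H
  antipode_left : ∀ h : H,
    tmul2 k (LinearMap.mulRight k α ∘ₗ S) LinearMap.id (qb.comul h) = qb.counit h • α
  antipode_right : ∀ h : H,
    tmul2 k (LinearMap.mulRight k β) S (qb.comul h) = qb.counit h • β
  antipode_assoc :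
    tmul3 k (LinearMap.mulRight k β) (LinearMap.mulRight k α ∘ₗ S) LinearMap.id qb.assoc = 1
  antipode_assocInv :
    tmul3 k (LinearMap.mulRight k α ∘ₗ S) (LinearMap.mulRight k β) LinearMap.id qb.assocInv = 1

/-!
If `H` is semisimple, the component of `1` in a complement of the augmentation ideal `ker ε` is a
left integral `t` with `ε t = 1`. Conversely, given a left integral with `ε t = 1`, the element
`E = φ¹ t₁ β ⊗ S(φ² t₂) α φ³` of `H ⊗ H` satisfies `m E = 1` (from the axioms on `β` and `φ`) and
`(h ⊗ 1) E = E (1 ⊗ h)` (from quasi-coassociativity and `h t = ε h t`). Such a separability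
element turns every `k`-linear retraction `r` of an inclusion of modules into the `H`-linear
retraction `m ↦ E¹ • r (E² • m)`, as in Maschke's theorem.
-/

section Separability

variable (k : Type*) {A : Type*} [CommRing k] [Ring A] [Algebra k A]

structure IsSeparabilityElement (e : A ⊗[k] A) : Prop where
  mul'_eq_one : LinearMap.mul' k A e = 1
  tmul_one_mul : ∀ a : A, (a ⊗ₜ[k] (1 : A)) * e = e * ((1 : A) ⊗ₜ[k] a)

variable {k} {M N : Type*} [AddCommGroup M] [Module A M] [Module k M] [IsScalarTower k A M]
  [AddCommGroup N] [Module A N] [Module k N] [IsScalarTower k A N]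

noncomputable def LinearMap.averageBy (e : A ⊗[k] A) (f : M →ₗ[k] N) : M →ₗ[k] N :=
  TensorProduct.lift (LinearMap.mk₂ k
    (fun a b => Algebra.lsmul k k N a ∘ₗ f ∘ₗ Algebra.lsmul k k M b)
    (fun _ _ _ => by ext; simp)
    (fun _ _ _ => by ext; simp)
    (fun _ _ _ => by ext; simp)
    (fun _ _ _ => by ext; simp [smul_comm (_ : A) (_ : k)])) e

namespace LinearMap

@[simp]
lemma averageBy_tmul (a b : A) (f : M →ₗ[k] N) (m : M) :
    averageBy (a ⊗ₜ[k] b) f m = a • f (b • m) := rfl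

lemma averageBy_add (e e' : A ⊗[k] A) (f : M →ₗ[k] N) :
    averageBy (e + e') f = averageBy e f + averageBy e' f := map_add _ e e'

lemma averageBy_tmul_one_mul (a : A) (e : A ⊗[k] A) (f : M →ₗ[k] N) (m : M) :
    averageBy ((a ⊗ₜ[k] (1 : A)) * e) f m = a • averageBy e f m := by
  induction e using TensorProduct.induction_on with
  | zero => simp [averageBy]
  | tmul b c => simp [mul_smul]
  | add x y hx hy => simp only [mul_add, averageBy_add, add_apply, hx, hy, smul_add]

lemma averageBy_mul_one_tmul (a : A) (e : A ⊗[k] A) (f : M →ₗ[k] N) (m : M) :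
    averageBy (e * ((1 : A) ⊗ₜ[k] a)) f m = averageBy e f (a • m) := by
  induction e using TensorProduct.induction_on with
  | zero => simp [averageBy]
  | tmul b c => simp [mul_smul]
  | add x y hx hy => simp only [add_mul, averageBy_add, add_apply, hx, hy]

lemma averageBy_comp {L : Type*} [AddCommGroup L] [Module A L] [Module k L] [IsScalarTower k A L]
    (e : A ⊗[k] A) (f : M →ₗ[k] N) (g : L →ₗ[A] M) :
    averageBy e (f ∘ₗ g.restrictScalars k) = averageBy e f ∘ₗ g.restrictScalars k := by
  induction e using TensorProduct.induction_on with
  | zero => simp [averageBy]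
  | tmul a b => ext; simp
  | add x y hx hy => simp only [averageBy_add, hx, hy, add_comp]

lemma averageBy_id (e : A ⊗[k] A) (m : M) : averageBy e LinearMap.id m = mul' k A e • m := by
  induction e using TensorProduct.induction_on with
  | zero => simp [averageBy]
  | tmul a b => simp [mul_smul]
  | add x y hx hy => simp only [averageBy_add, add_apply, hx, hy, map_add, add_smul]

end LinearMap

namespace IsSeparabilityElement

variable {e : A ⊗[k] A} (he : IsSeparabilityElement k e)
include he

noncomputable def averageLinearMap (f : M →ₗ[k] N) : M →ₗ[A] N where
  toFun := f.averageBy e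
  map_add' := map_add _
  map_smul' a m := by
    rw [RingHom.id_apply, ← LinearMap.averageBy_mul_one_tmul, ← he.tmul_one_mul,
      LinearMap.averageBy_tmul_one_mul]

end IsSeparabilityElement

end Separability

namespace IsSeparabilityElement

variable {k A M N : Type*} [Field k] [Ring A] [Algebra k A]
  [AddCommGroup M] [Module A M] [Module k M] [IsScalarTower k A M]
  [AddCommGroup N] [Module A N] [Module k N] [IsScalarTower k A N]
  {e : A ⊗[k] A} (he : IsSeparabilityElement k e)
include he

lemma exists_leftInverse_of_injective (i : M →ₗ[A] N) (hi : Function.Injective i) :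
    ∃ r : N →ₗ[A] M, r ∘ₗ i = LinearMap.id := by
  obtain ⟨φ, hφ⟩ := (i.restrictScalars k).exists_leftInverse_of_injective
    (LinearMap.ker_eq_bot.mpr hi)
  refine ⟨he.averageLinearMap φ, LinearMap.ext fun m => ?_⟩
  calc φ.averageBy e (i m) = (φ ∘ₗ i.restrictScalars k).averageBy e m :=
        (LinearMap.congr_fun (LinearMap.averageBy_comp e φ i) m).symm
    _ = m := by rw [hφ, LinearMap.averageBy_id, he.mul'_eq_one, one_smul]

theorem isSemisimpleModule : IsSemisimpleModule A M where
  exists_isCompl p := by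
    obtain ⟨r, hr⟩ := he.exists_leftInverse_of_injective p.subtype p.subtype_injective
    exact ⟨LinearMap.ker r, LinearMap.isCompl_of_proj (LinearMap.congr_fun hr)⟩

end IsSeparabilityElement

theorem exists_leftIntegral_of_isSemisimpleRing {k H : Type*} [CommRing k] [Nontrivial k]
    [Ring H] [Algebra k H] [IsSemisimpleRing H] (ε : H →ₐ[k] k) :
    ∃ t : H, (∀ h : H, h * t = ε h • t) ∧ ε t ≠ 0 := by
  let K : Submodule H H := RingHom.ker ε
  obtain ⟨I, hI⟩ := exists_isCompl K
  obtain ⟨a, haK, t, htI, hat⟩ :=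
    Submodule.mem_sup.mp (hI.sup_eq_top ▸ Submodule.mem_top (x := (1 : H)))
  have hεt : ε t = 1 := by
    have : ε a = 0 := haK
    rw [← map_one ε, ← hat, map_add, this, zero_add]
  refine ⟨t, fun h => ?_, by simp [hεt]⟩
  have hmemK : h * t - ε h • t ∈ K := by
    change ε (h * t - ε h • t) = 0
    simp [hεt]
  have hmemI : h * t - ε h • t ∈ I :=
    I.sub_mem (I.smul_mem h htI) (by rw [Algebra.smul_def]; exact I.smul_mem _ htI)
  exact sub_eq_zero.mp ((Submodule.disjoint_def.mp hI.disjoint) _ hmemK hmemI)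

lemma tmul2_tmul {k H : Type*} [Field k] [Ring H] [Algebra k H] (f g : H →ₗ[k] H) (a b : H) :
    tmul2 k f g (a ⊗ₜ[k] b) = f a * g b := rfl

lemma tmul3_tmul {k H : Type*} [Field k] [Ring H] [Algebra k H] (f g h : H →ₗ[k] H) (a : H)
    (z : H ⊗[k] H) : tmul3 k f g h (a ⊗ₜ[k] z) = f a * tmul2 k g h z := rfl

lemma QuasiBialgebra.map_comul_mul_comul_tmul_one {k H : Type*} [Field k] [Ring H] [Algebra k H]
    (qb : QuasiBialgebra k H) {t : H} (ht : ∀ h : H, h * t = qb.counit h • t) (Y : H ⊗[k] H) :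
    Algebra.TensorProduct.map qb.comul (AlgHom.id k H) Y * (qb.comul t ⊗ₜ[k] 1) =
      qb.comul t ⊗ₜ[k]
        TensorProduct.lid k H (TensorProduct.map qb.counit.toLinearMap LinearMap.id Y) := by
  induction Y using TensorProduct.induction_on with
  | zero => simp
  | tmul a b => simp [← map_mul, ht a, smul_tmul]
  | add Y Z hY hZ => simp only [map_add, add_mul, hY, hZ, tmul_add]

namespace QuasiAntipode

variable {k H : Type*} [Field k] [Ring H] [Algebra k H] {qb : QuasiBialgebra k H}
  (qa : QuasiAntipode qb)

noncomputable abbrev alphaContract : H ⊗[k] H →ₗ[k] H :=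
  tmul2 k (LinearMap.mulRight k qa.α ∘ₗ qa.S) LinearMap.id

lemma alphaContract_tmul (v w : H) : qa.alphaContract (v ⊗ₜ[k] w) = qa.S v * qa.α * w := rfl

lemma alphaContract_mul_tmul (z : H ⊗[k] H) (c d : H) :
    qa.alphaContract (z * (c ⊗ₜ[k] d)) = qa.S c * qa.alphaContract z * d := by
  induction z using TensorProduct.induction_on with
  | zero => simp
  | tmul v w => simp [alphaContract_tmul, qa.S_mul, mul_assoc]
  | add x y hx hy => simp only [add_mul, map_add, hx, hy, mul_add]

lemma alphaContract_comul_mul (b : H) (z : H ⊗[k] H) :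
    qa.alphaContract (qb.comul b * z) = qb.counit b • qa.alphaContract z := by
  induction z using TensorProduct.induction_on with
  | zero => simp
  | tmul c d => rw [alphaContract_mul_tmul, qa.antipode_left, alphaContract_tmul]; simp [mul_assoc]
  | add x y hx hy => simp only [mul_add, map_add, hx, hy, smul_add]

noncomputable def separabilityMap : H ⊗[k] (H ⊗[k] H) →ₗ[k] H ⊗[k] H :=
  TensorProduct.map (LinearMap.mulRight k qa.β) qa.alphaContract

lemma separabilityMap_tmul (u : H) (z : H ⊗[k] H) :
    qa.separabilityMap (u ⊗ₜ[k] z) = (u * qa.β) ⊗ₜ[k] qa.alphaContract z := rfl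

lemma separabilityMap_map_comul_mul (Y : H ⊗[k] H) (x : H ⊗[k] (H ⊗[k] H)) :
    qa.separabilityMap (Algebra.TensorProduct.map (AlgHom.id k H) qb.comul Y * x) =
      (TensorProduct.rid k H (TensorProduct.map LinearMap.id qb.counit.toLinearMap Y) ⊗ₜ[k] 1) *
        qa.separabilityMap x := by
  induction Y using TensorProduct.induction_on with
  | zero => simp
  | tmul a b =>
    induction x using TensorProduct.induction_on with
    | zero => simp
    | tmul u z =>
      simp [separabilityMap_tmul, alphaContract_comul_mul, smul_tmul', mul_assoc]
    | add x y hx hy => simp only [mul_add, map_add, hx, hy]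
  | add Y Z hY hZ => simp only [map_add, add_mul, hY, hZ, add_tmul]

lemma separabilityMap_mul_one_tmul (x : H ⊗[k] (H ⊗[k] H)) (h : H) :
    qa.separabilityMap (x * ((1 : H) ⊗ₜ[k] ((1 : H) ⊗ₜ[k] h))) =
      qa.separabilityMap x * ((1 : H) ⊗ₜ[k] h) := by
  induction x using TensorProduct.induction_on with
  | zero => simp
  | tmul u z => simp [separabilityMap_tmul, alphaContract_mul_tmul, qa.S_one]
  | add x y hx hy => simp only [add_mul, map_add, hx, hy]

lemma mul'_separabilityMap_mul_assoc (x : H ⊗[k] (H ⊗[k] H)) (τ : H ⊗[k] H) :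
    LinearMap.mul' k H
        (qa.separabilityMap (x * Algebra.TensorProduct.assoc k k k H H H (τ ⊗ₜ[k] 1))) =
      tmul3 k (LinearMap.mulRight k (tmul2 k (LinearMap.mulRight k qa.β) qa.S τ))
        (LinearMap.mulRight k qa.α ∘ₗ qa.S) LinearMap.id x := by
  induction x using TensorProduct.induction_on with
  | zero => simp
  | tmul u z =>
    induction τ using TensorProduct.induction_on with
    | zero => simp [tmul3_tmul]
    | tmul a b =>
      simp [separabilityMap_tmul, alphaContract_mul_tmul, tmul3_tmul, tmul2_tmul, mul_assoc]
    | add σ ρ hσ hρ => simp_all [add_tmul, mul_add, tmul3_tmul, add_mul]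
  | add x y hx hy => simp only [add_mul, map_add, hx, hy]

noncomputable def separabilityElement (t : H) : H ⊗[k] H :=
  qa.separabilityMap (qb.assoc * Algebra.TensorProduct.assoc k k k H H H (qb.comul t ⊗ₜ[k] 1))

theorem isSeparabilityElement_separabilityElement {t : H}
    (ht : ∀ h : H, h * t = qb.counit h • t) (hε : qb.counit t = 1) :
    IsSeparabilityElement k (qa.separabilityElement t) where
  mul'_eq_one := by
    rw [separabilityElement, mul'_separabilityMap_mul_assoc, qa.antipode_right, hε, one_smul]
    exact qa.antipode_assoc
  tmul_one_mul h := by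
    let a := Algebra.TensorProduct.assoc k k k H H H
    have hcoassoc : Algebra.TensorProduct.map (AlgHom.id k H) qb.comul (qb.comul h) * qb.assoc =
        qb.assoc * a (Algebra.TensorProduct.map qb.comul (AlgHom.id k H) (qb.comul h)) :=
      qb.quasi_coassoc h
    have hintegral : Algebra.TensorProduct.map qb.comul (AlgHom.id k H) (qb.comul h) *
        (qb.comul t ⊗ₜ[k] 1) = (qb.comul t ⊗ₜ[k] 1) * ((1 : H ⊗[k] H) ⊗ₜ[k] h) := by
      rw [qb.map_comul_mul_comul_tmul_one ht, qb.counit_comul_left,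
        Algebra.TensorProduct.tmul_mul_tmul, mul_one, one_mul]
    calc (h ⊗ₜ[k] (1 : H)) * qa.separabilityElement t
        = qa.separabilityMap (Algebra.TensorProduct.map (AlgHom.id k H) qb.comul (qb.comul h) *
            (qb.assoc * a (qb.comul t ⊗ₜ[k] 1))) := by
          rw [separabilityMap_map_comul_mul, qb.counit_comul_right, separabilityElement]
      _ = qa.separabilityMap (qb.assoc * a (qb.comul t ⊗ₜ[k] 1) *
            ((1 : H) ⊗ₜ[k] ((1 : H) ⊗ₜ[k] h))) := by
          rw [← mul_assoc, hcoassoc, mul_assoc, ← map_mul a, hintegral, map_mul a, ← mul_assoc,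
            Algebra.TensorProduct.one_def, Algebra.TensorProduct.assoc_tmul]
      _ = qa.separabilityElement t * ((1 : H) ⊗ₜ[k] h) := by
          rw [separabilityMap_mul_one_tmul, separabilityElement]

end QuasiAntipode

theorem quasiHopf_semisimple_iff_integral_general
    {k H : Type*} [Field k] [Ring H] [Algebra k H]
    (qb : QuasiBialgebra k H) (qa : QuasiAntipode qb) :
    IsSemisimpleRing H ↔
      ∃ t : H, (∀ h : H, h * t = qb.counit h • t) ∧ qb.counit t ≠ 0 := by
  refine ⟨fun _ => exists_leftIntegral_of_isSemisimpleRing qb.counit, ?_⟩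
  rintro ⟨t, ht, hεt⟩
  have ht' : ∀ h : H, h * ((qb.counit t)⁻¹ • t) = qb.counit h • ((qb.counit t)⁻¹ • t) := by
    intro h
    rw [mul_smul_comm, ht h, smul_comm]
  have hεt' : qb.counit ((qb.counit t)⁻¹ • t) = 1 := by
    rw [map_smul, smul_eq_mul, inv_mul_cancel₀ hεt]
  exact (qa.isSeparabilityElement_separabilityElement ht' hεt').isSemisimpleModule

/-- **Panaite's theorem.** A finite-dimensional quasi-Hopf algebra is semisimple (as a
ring) if and only if it contains a left integral `t` (an element with `h * t = ε h • t`
for all `h`) with `ε t ≠ 0`. -/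
theorem quasiHopf_semisimple_iff_integral
    {k H : Type*} [Field k] [Ring H] [Algebra k H]
    (qb : QuasiBialgebra k H) (qa : QuasiAntipode qb) [FiniteDimensional k H] :
    IsSemisimpleRing H ↔
      ∃ t : H, (∀ h : H, h * t = qb.counit h • t) ∧ qb.counit t ≠ 0 :=
  quasiHopf_semisimple_iff_integral_general qb qa
end

section
/- Let H be a finite-dimensional quasi-Hopf algebra over a field k with counit ε, and let K ⊆ H be a subalgebra such that H is free as a left K-module. If H contains a left integral t (that is, ht = ε(h)t for all h ∈ H) with ε(t) ≠ 0, then K contains an element t' with kt' = ε(k)t' for all k ∈ K and ε(t') ≠ 0. -/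
open TensorProduct MulOpposite

/-!
Write `t = ∑ cᵢ bᵢ` in a `K`-basis `b` of `H`. Since `K`-coordinates are `K`-linear, each
coefficient `cᵢ ∈ K` inherits `a cᵢ = ε(a) cᵢ` from `t`; since `ε` is multiplicative,
`ε(t) = ∑ ε(cᵢ) ε(bᵢ)`, so `ε(cᵢ) ≠ 0` for some `i`, and that `cᵢ` is the required `t'`.
-/

theorem Module.Basis.mul_repr_eq_smul_of_smul_eq {k R M ι : Type*} [CommSemiring k] [Semiring R]
    [Algebra k R] [AddCommMonoid M] [Module R M] [Module k M] [IsScalarTower k R M]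
    (b : Module.Basis ι R M) {a : R} {c : k} {m : M} (h : a • m = c • m) (i : ι) :
    a * b.repr m i = c • b.repr m i := by
  rw [← algebraMap_smul R c m] at h
  have := congr($(congrArg b.repr h) i)
  rwa [map_smul, map_smul, Finsupp.smul_apply, Finsupp.smul_apply, smul_eq_mul, smul_eq_mul,
    ← Algebra.smul_def] at this

theorem Module.Basis.exists_map_repr_ne_zero {k H S ι : Type*} [CommSemiring k] [Semiring H]
    [Algebra k H] [Semiring S] {K : Subalgebra k H} (b : Module.Basis ι K H) (f : H →+* S)
    {t : H} (ht : f t ≠ 0) : ∃ i, f (b.repr t i) ≠ 0 := by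
  by_contra! hzero
  apply ht
  rw [← b.linearCombination_repr t, Finsupp.linearCombination_apply, Finsupp.sum, map_sum]
  exact Finset.sum_eq_zero fun i _ => by
    rw [show (b.repr t i) • b i = (b.repr t i : H) * b i from rfl, map_mul, hzero, zero_mul]

theorem integral_descends_to_subalgebra_general
    {k H : Type*} [Field k] [Ring H] [Algebra k H]
    (qb : QuasiBialgebra k H)
    (K : Subalgebra k H) (hfree : Module.Free K H)
    (t : H) (ht : ∀ h : H, h * t = qb.counit h • t) (htn : qb.counit t ≠ 0) :
    ∃ t' : K, (∀ a : K, a * t' = qb.counit (a : H) • t') ∧ qb.counit (t' : H) ≠ 0 := by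
  let b := Module.Free.chooseBasis K H
  obtain ⟨i, hi⟩ := b.exists_map_repr_ne_zero (qb.counit : H →+* k) htn
  exact ⟨b.repr t i, fun a => b.mul_repr_eq_smul_of_smul_eq (ht a) i, hi⟩

/-- If a finite-dimensional quasi-Hopf algebra `H` is free as a left module over a
subalgebra `K` and contains a left integral `t` with `ε t ≠ 0`, then `K` contains an
element `t'` with `a * t' = ε a • t'` for all `a ∈ K` and `ε t' ≠ 0`. -/
theorem integral_descends_to_subalgebra
    {k H : Type*} [Field k] [Ring H] [Algebra k H]
    (qb : QuasiBialgebra k H) (qa : QuasiAntipode qb) [FiniteDimensional k H]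
    (K : Subalgebra k H) (hfree : Module.Free K H)
    (t : H) (ht : ∀ h : H, h * t = qb.counit h • t) (htn : qb.counit t ≠ 0) :
    ∃ t' : K, (∀ a : K, a * t' = qb.counit (a : H) • t') ∧ qb.counit (t' : H) ≠ 0 :=
  integral_descends_to_subalgebra_general qb K hfree t ht htn
end
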